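/- For the exponential loss φ(α) = exp(−α), the ψ-transform satisfies ψ(θ) = 1 − √(1−θ²) for all θ ∈ [0,1]. -/

import Mathlib

open Set

/-- The conditional `φ`-risk `C_η(α) = η φ(α) + (1-η) φ(-α)`. -/
noncomputable def condRisk (φ : ℝ → ℝ) (η α : ℝ) : ℝ := η * φ α + (1 - η) * φ (-α)

/-- `H(η) = inf_α C_η(α)`. -/
noncomputable def Hopt (φ : ℝ → ℝ) (η : ℝ) : ℝ := ⨅ α : ℝ, condRisk φ η α

/-- `H⁻(η)`, the infimum of `C_η(α)` over `α` with `α (2η - 1) ≤ 0`. -/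
noncomputable def Hneg (φ : ℝ → ℝ) (η : ℝ) : ℝ :=
  ⨅ α : {a : ℝ // a * (2 * η - 1) ≤ 0}, condRisk φ η α.1

/-- `ψ̃(θ) = H⁻((1+θ)/2) − H((1+θ)/2)`. -/
noncomputable def psiTilde (φ : ℝ → ℝ) (θ : ℝ) : ℝ :=
  Hneg φ ((1 + θ) / 2) - Hopt φ ((1 + θ) / 2)

/-- The `ψ`-transform: the largest convex lower bound (biconjugate) of `ψ̃` on `[0,1]`. -/
noncomputable def psiT (φ : ℝ → ℝ) (θ : ℝ) : ℝ :=
  sSup {y : ℝ | ∃ g : ℝ → ℝ, ConvexOn ℝ (Icc 0 1) g ∧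
    (∀ t ∈ Icc (0:ℝ) 1, g t ≤ psiTilde φ t) ∧ y = g θ}

/-- `φ` is classification-calibrated: for every `η ≠ 1/2`, `H⁻(η) > H(η)`. -/
def ClassificationCalibrated (φ : ℝ → ℝ) : Prop :=
  ∀ η ∈ Icc (0:ℝ) 1, η ≠ 1 / 2 → Hopt φ η < Hneg φ η

/-! For the exponential loss, `C_η(α) = η e^{-α} + (1 - η) e^{α}`. By AM–GM its infimum over all `α`
is `H(η) = 2 √η √(1 - η)`, while on the half-line `α (2η - 1) ≤ 0` the tangent bound `e^x ≥ 1 + x`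
shows that `α = 0` is optimal, so `H⁻(η) = 1`. Hence `ψ̃(θ) = 1 - √(1 - θ²)`, which is already
convex (`√` of the concave `1 - θ²` is concave), so it is its own convex biconjugate. -/

open Real

lemma two_mul_mul_le_sq_mul_exp_neg_add_sq_mul_exp (s t α : ℝ) :
    2 * s * t ≤ s ^ 2 * exp (-α) + t ^ 2 * exp α := by
  have hsplit : exp (-α) * exp α = 1 := by rw [← exp_add, neg_add_cancel, exp_zero]
  have hsq : s ^ 2 * exp (-α) + t ^ 2 * exp α - 2 * s * t = exp α * (s * exp (-α) - t) ^ 2 := by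
    linear_combination (2 * s * t - s ^ 2 * exp (-α)) * hsplit
  linarith [mul_nonneg (exp_pos α).le (sq_nonneg (s * exp (-α) - t))]

-- The exact minimizer `log (s / t)` is perturbed by `δ` so that `s = 0` or `t = 0` is allowed.
lemma sq_mul_exp_neg_add_sq_mul_exp_log_le {s t δ : ℝ} (hs : 0 ≤ s) (ht : 0 ≤ t) (hδ : 0 < δ) :
    s ^ 2 * exp (-log ((s + δ) / (t + δ))) + t ^ 2 * exp (log ((s + δ) / (t + δ)))
      ≤ 2 * s * t + δ * (s + t) := by
  rw [exp_neg, exp_log (by positivity), inv_div]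
  have hs' : s ^ 2 * ((t + δ) / (s + δ)) ≤ s * (t + δ) := by
    rw [mul_div_assoc', div_le_iff₀ (by positivity)]
    nlinarith [mul_nonneg hs (mul_nonneg (add_nonneg ht hδ.le) hδ.le)]
  have ht' : t ^ 2 * ((s + δ) / (t + δ)) ≤ t * (s + δ) := by
    rw [mul_div_assoc', div_le_iff₀ (by positivity)]
    nlinarith [mul_nonneg ht (mul_nonneg (add_nonneg hs hδ.le) hδ.le)]
  linarith

lemma iInf_sq_mul_exp_neg_add_sq_mul_exp {s t : ℝ} (hs : 0 ≤ s) (ht : 0 ≤ t) :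
    ⨅ α : ℝ, s ^ 2 * exp (-α) + t ^ 2 * exp α = 2 * s * t := by
  refine ciInf_eq_of_forall_ge_of_forall_gt_exists_lt
    (two_mul_mul_le_sq_mul_exp_neg_add_sq_mul_exp s t) fun w hw => ?_
  set δ := (w - 2 * s * t) / (s + t + 1)
  have hδ : 0 < δ := div_pos (by linarith) (by positivity)
  have hδw : δ * (s + t) < w - 2 * s * t := by
    have : δ * (s + t + 1) = w - 2 * s * t := div_mul_cancel₀ _ (by positivity)
    linarith
  exact ⟨_, (sq_mul_exp_neg_add_sq_mul_exp_log_le hs ht hδ).trans_lt (by linarith)⟩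

lemma Hopt_exp {η : ℝ} (h0 : 0 ≤ η) (h1 : η ≤ 1) :
    Hopt (fun α => exp (-α)) η = 2 * √η * √(1 - η) := by
  have hrisk : condRisk (fun α => exp (-α)) η =
      fun α => √η ^ 2 * exp (-α) + √(1 - η) ^ 2 * exp α := by
    ext α
    rw [condRisk, sq_sqrt h0, sq_sqrt (sub_nonneg.mpr h1), neg_neg]
  rw [Hopt, hrisk, iInf_sq_mul_exp_neg_add_sq_mul_exp (sqrt_nonneg _) (sqrt_nonneg _)]

lemma Hneg_exp {η : ℝ} (h0 : 0 ≤ η) (h1 : η ≤ 1) : Hneg (fun α => exp (-α)) η = 1 := by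
  have : Nonempty {a : ℝ // a * (2 * η - 1) ≤ 0} := ⟨⟨0, by simp⟩⟩
  refine ciInf_eq_of_forall_ge_of_forall_gt_exists_lt (fun ⟨α, hα⟩ => ?_)
    fun w hw => ⟨⟨0, by simp⟩, by simpa [condRisk] using hw⟩
  have hrisk : condRisk (fun α => exp (-α)) η α = η * exp (-α) + (1 - η) * exp α := by
    rw [condRisk, neg_neg]
  -- `e^x ≥ 1 + x` bounds the risk below by `1 - α (2η - 1) ≥ 1`
  nlinarith [add_one_le_exp (-α), add_one_le_exp α]

lemma psiTilde_exp {θ : ℝ} (hθ : θ ∈ Icc (-1 : ℝ) 1) :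
    psiTilde (fun α => exp (-α)) θ = 1 - √(1 - θ ^ 2) := by
  obtain ⟨h0, h1⟩ := hθ
  rw [psiTilde, Hneg_exp (by linarith) (by linarith), Hopt_exp (by linarith) (by linarith),
    show 1 - θ ^ 2 = 2 ^ 2 * ((1 + θ) / 2 * (1 - (1 + θ) / 2)) by ring,
    sqrt_mul (by norm_num), sqrt_sq zero_le_two, sqrt_mul (by linarith), mul_assoc]

lemma concaveOn_sqrt_one_sub_sq : ConcaveOn ℝ (Icc (-1 : ℝ) 1) fun θ => √(1 - θ ^ 2) := by
  set f : ℝ → ℝ := fun θ => 1 - θ ^ 2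
  have hf : ConcaveOn ℝ (Icc (-1) 1) f :=
    (concaveOn_const 1 (convex_Icc _ _)).sub
      ((even_two.convexOn_pow).subset (subset_univ _) (convex_Icc _ _))
  have himage : f '' Icc (-1) 1 ⊆ Ici 0 := by
    rintro _ ⟨θ, ⟨h0, h1⟩, rfl⟩
    show 0 ≤ 1 - θ ^ 2
    nlinarith
  have hconv : Convex ℝ (f '' Icc (-1) 1) :=
    (isPreconnected_Icc.image f (by fun_prop)).convex
  exact (strictConcaveOn_sqrt.concaveOn.subset himage hconv).comp hf
    fun _ _ _ _ hab => sqrt_le_sqrt hab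

lemma psiT_eq_psiTilde_of_convexOn {φ : ℝ → ℝ} (hconv : ConvexOn ℝ (Icc 0 1) (psiTilde φ))
    {θ : ℝ} (hθ : θ ∈ Icc (0 : ℝ) 1) : psiT φ θ = psiTilde φ θ :=
  IsGreatest.csSup_eq ⟨⟨psiTilde φ, hconv, fun _ _ => le_rfl, rfl⟩,
    by rintro y ⟨g, -, hg, rfl⟩; exact hg θ hθ⟩

/-- For the exponential loss `φ(α) = exp (-α)`, the `ψ`-transform is
`ψ(θ) = 1 - √(1 - θ²)` on `[0,1]`. -/
theorem psi_transform_exponential :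
    ∀ θ ∈ Icc (0:ℝ) 1, psiT (fun α => Real.exp (-α)) θ = 1 - Real.sqrt (1 - θ ^ 2) := by
  intro θ hθ
  have hunit : Icc (0 : ℝ) 1 ⊆ Icc (-1) 1 := Icc_subset_Icc (by norm_num) le_rfl
  have hψ : EqOn (fun θ => 1 - √(1 - θ ^ 2)) (psiTilde fun α => exp (-α)) (Icc 0 1) :=
    fun t ht => (psiTilde_exp (hunit ht)).symm
  have hconv : ConvexOn ℝ (Icc 0 1) (psiTilde fun α => exp (-α)) :=
    ((convexOn_const 1 (convex_Icc 0 1)).sub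
      (concaveOn_sqrt_one_sub_sq.subset hunit (convex_Icc 0 1))).congr hψ
  rw [psiT_eq_psiTilde_of_convexOn hconv hθ, ← hψ hθ]
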